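/- In dimension 3, the twisted algebraic Weitzenböck relation holds: π_{j+1}(e_k)π⁺_j(e_l) - π⁺_j(e_k)π_j(e_l) = ((2j+3)/2)·π⁺_j([e_k,e_l]) as maps W_j → W_{j+1}, for all k, l ∈ {1,2,3}. -/

import Mathlib

/-- The Levi-Civita symbol on `Fin 3`. -/
def epsLC (i j k : Fin 3) : ℤ :=
  ((j.val : ℤ) - i.val) * ((k.val : ℤ) - j.val) * ((k.val : ℤ) - i.val) / 2

/-- `φ ⊗ e_k ∈ W ⊗ ℂ³`, with `W ⊗ ℂ³` modelled as `PiLp 2 (Fin 3 → W)`. -/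
noncomputable def tensE (W : Type*) [NormedAddCommGroup W] [InnerProductSpace ℂ W]
    (k : Fin 3) : W →ₗ[ℂ] PiLp 2 fun _ : Fin 3 => W :=
  (WithLp.linearEquiv 2 ℂ (∀ _ : Fin 3, W)).symm.toLinearMap ∘ₗ
    LinearMap.single ℂ (fun _ : Fin 3 => W) k

/-! Write `Q_m := ιp† ∘ (· ⊗ e_m) : W_j → W_{j+1}`. As `ιp†` intertwines the action on
`W_j ⊗ ℂ³` with `π_{j+1}`, we get `π_{j+1}(e_i) Q_m = Q_m π_j(e_i) + Σ_n 2ε_{imn} Q_n`.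
Applying this twice and summing over `i` compares the Casimirs of `W_{j+1}` and `W_j`, which pins
down `Σ_{i,n} ε_{imn} Q_n π_j(e_i) = -(2j+1) Q_m`. Contracting with `ε_{klm}` turns this into
`Q_l π_j(e_k) - Q_k π_j(e_l) = (2j+1) Σ_m ε_{klm} Q_m`, and the `ε`-term of the first relation
raises `2j+1` to `2j+3`. -/

open LinearMap

section TwistedIntertwiner

variable {R M N : Type*} [CommRing R] [AddCommGroup M] [Module R M] [AddCommGroup N] [Module R N]

theorem sum_epsLC_smul_sum_epsLC_smul {X : Type*} [AddCommGroup X] [Module R X]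
    (F : Fin 3 → Fin 3 → X) (a b : Fin 3) :
    ∑ m, (epsLC a b m : R) • ∑ i, ∑ n, (epsLC i m n : R) • F n i = F a b - F b a := by
  fin_cases a <;> fin_cases b <;> simp [Fin.sum_univ_three, epsLC] <;> module

/-- `Q m` plays the role of `Q (· ⊗ e_m)` for a map `Q : M ⊗ R³ → N` intertwining
`A ⊗ 1 + 1 ⊗ ad` with `P`. -/
def IsTwistedIntertwiner (A : Fin 3 → Module.End R M) (P : Fin 3 → Module.End R N)
    (Q : Fin 3 → M →ₗ[R] N) : Prop :=
  ∀ i m, P i ∘ₗ Q m = Q m ∘ₗ A i + ∑ n, ((2 * epsLC i m n : ℤ) : R) • Q n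

variable {A : Fin 3 → Module.End R M} {P : Fin 3 → Module.End R N} {Q : Fin 3 → M →ₗ[R] N}
  {cA cP : R}

theorem IsTwistedIntertwiner.comp_comp (hQ : IsTwistedIntertwiner A P Q) (i m : Fin 3)
    (f : Module.End R M) :
    P i ∘ₗ Q m ∘ₗ f = Q m ∘ₗ A i ∘ₗ f + ∑ n, ((2 * epsLC i m n : ℤ) : R) • Q n ∘ₗ f := by
  rw [← comp_assoc, hQ]
  ext x
  simp

theorem IsTwistedIntertwiner.casimir (hQ : IsTwistedIntertwiner A P Q)
    (hA : ∑ i, A i ∘ₗ A i = cA • LinearMap.id) (hP : ∑ i, P i ∘ₗ P i = cP • LinearMap.id)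
    (m : Fin 3) :
    (4 : R) • ∑ i, ∑ n, (epsLC i m n : R) • (Q n ∘ₗ A i) = (cP - cA + 8) • Q m := by
  have hPP := congrArg (· ∘ₗ Q m) hP
  have hAA := congrArg (Q m ∘ₗ ·) hA
  simp only [Fin.sum_univ_three, add_comp, comp_add, smul_comp, comp_smul, id_comp, comp_id,
    comp_assoc, hQ _ _, hQ.comp_comp] at hPP hAA
  -- the `8` is the double contraction `Σ_{i,n} 4 ε_{imn} ε_{inp} = -8 δ_{mp}`
  fin_cases m <;> simp [Fin.sum_univ_three, epsLC] at hPP hAA ⊢ <;>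
    linear_combination (norm := module) hPP - hAA

theorem IsTwistedIntertwiner.comp_sub_comp (hQ : IsTwistedIntertwiner A P Q)
    (hA : ∑ i, A i ∘ₗ A i = cA • LinearMap.id) (hP : ∑ i, P i ∘ₗ P i = cP • LinearMap.id)
    (k l : Fin 3) :
    (4 : R) • (P k ∘ₗ Q l - Q k ∘ₗ A l) = (cA - cP) • ∑ m, (epsLC k l m : R) • Q m := by
  have hcomm := sum_epsLC_smul_sum_epsLC_smul (R := R) (fun n i => Q n ∘ₗ A i) k l
  have h4 : (4 : R) • (Q k ∘ₗ A l - Q l ∘ₗ A k) =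
      ∑ m, (epsLC k l m : R) • (cP - cA + 8) • Q m := by
    simp only [← hcomm, Finset.smul_sum, ← hQ.casimir hA hP, smul_comm (4 : R)]
  rw [hQ]
  simp only [Fin.sum_univ_three] at h4 ⊢
  linear_combination (norm := module) -h4

end TwistedIntertwiner

theorem LinearMap.comp_adjoint_eq_adjoint_comp_of_skew {𝕜 E F : Type*} [RCLike 𝕜]
    [NormedAddCommGroup E] [InnerProductSpace 𝕜 E] [FiniteDimensional 𝕜 E]
    [NormedAddCommGroup F] [InnerProductSpace 𝕜 F] [FiniteDimensional 𝕜 F]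
    {ι : E →ₗ[𝕜] F} {B : Module.End 𝕜 E} {C : Module.End 𝕜 F}
    (hB : adjoint B = -B) (hC : adjoint C = -C) (h : ι ∘ₗ B = C ∘ₗ ι) :
    B ∘ₗ adjoint ι = adjoint ι ∘ₗ C := by
  have h' := congrArg adjoint h
  rwa [adjoint_comp, adjoint_comp, hB, hC, comp_neg, neg_comp, neg_inj] at h'

section TensorAdjointAction

variable {W : Type*} [NormedAddCommGroup W] [InnerProductSpace ℂ W]

/-- `ρ` is the action `A ⊗ 1 + 1 ⊗ ad` on `W ⊗ ℂ³`. -/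
def IsTensorAdjointAction (A : Fin 3 → Module.End ℂ W)
    (ρ : Fin 3 → Module.End ℂ (PiLp 2 fun _ : Fin 3 => W)) : Prop :=
  ∀ k f i, (WithLp.equiv 2 (∀ _ : Fin 3, W)) (ρ k f) i
    = A k ((WithLp.equiv 2 (∀ _ : Fin 3, W)) f i)
      + ∑ m, ((2 * epsLC k m i : ℤ) : ℂ) • (WithLp.equiv 2 (∀ _ : Fin 3, W)) f m

variable {A : Fin 3 → Module.End ℂ W} {ρ : Fin 3 → Module.End ℂ (PiLp 2 fun _ : Fin 3 => W)}

theorem IsTensorAdjointAction.apply (hρ : IsTensorAdjointAction A ρ) (k : Fin 3)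
    (f : PiLp 2 fun _ : Fin 3 => W) (i : Fin 3) :
    ρ k f i = A k (f i) + ∑ m, ((2 * epsLC k m i : ℤ) : ℂ) • f m := by
  simpa using hρ k f i

theorem IsTensorAdjointAction.adjoint_eq_neg [FiniteDimensional ℂ W]
    (hρ : IsTensorAdjointAction A ρ) (hA : ∀ k, adjoint (A k) = -A k) (k : Fin 3) :
    adjoint (ρ k) = -ρ k := by
  refine ((eq_adjoint_iff _ _).mpr fun x y => ?_).symm
  have hAk : ∀ u v, inner ℂ (A k u) v = -inner ℂ u (A k v) := fun u v => by
    rw [← adjoint_inner_right, hA, LinearMap.neg_apply, inner_neg_right]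
  simp only [LinearMap.neg_apply, inner_neg_left, PiLp.inner_apply, hρ.apply, inner_add_left,
    inner_add_right, inner_smul_left, inner_smul_right, hAk, Fin.sum_univ_three]
  fin_cases k <;> simp [epsLC, map_ofNat] <;> ring

theorem IsTensorAdjointAction.comp_tensE (hρ : IsTensorAdjointAction A ρ) (k m : Fin 3) :
    ρ k ∘ₗ tensE W m = tensE W m ∘ₗ A k + ∑ n, ((2 * epsLC k m n : ℤ) : ℂ) • tensE W n := by
  ext φ i
  by_cases h : i = m <;> simp [hρ.apply, tensE, Pi.single_apply, h]

theorem IsTensorAdjointAction.isTwistedIntertwiner_adjoint_comp_tensE [FiniteDimensional ℂ W]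
    {V : Type*} [NormedAddCommGroup V] [InnerProductSpace ℂ V] [FiniteDimensional ℂ V]
    {B : Fin 3 → Module.End ℂ V} {ι : V →ₗ[ℂ] PiLp 2 fun _ : Fin 3 => W}
    (hρ : IsTensorAdjointAction A ρ) (hA : ∀ k, adjoint (A k) = -A k)
    (hB : ∀ k, adjoint (B k) = -B k) (hι : ∀ k, ι ∘ₗ B k = ρ k ∘ₗ ι) :
    IsTwistedIntertwiner A B (fun m => adjoint ι ∘ₗ tensE W m) := by
  intro i m
  rw [← comp_assoc, comp_adjoint_eq_adjoint_comp_of_skew (hB i) (hρ.adjoint_eq_neg hA i) (hι i),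
    comp_assoc, hρ.comp_tensE]
  ext φ
  simp

end TensorAdjointAction

theorem twisted_algebraic_weitzenbock (j : ℕ)
    (W Wp : Type*)
    [NormedAddCommGroup W] [InnerProductSpace ℂ W] [FiniteDimensional ℂ W]
    [NormedAddCommGroup Wp] [InnerProductSpace ℂ Wp] [FiniteDimensional ℂ Wp]
    (A : Fin 3 → W →ₗ[ℂ] W) (Ap : Fin 3 → Wp →ₗ[ℂ] Wp)
    (hAskew : ∀ k, LinearMap.adjoint (A k) = -A k)
    (hApskew : ∀ k, LinearMap.adjoint (Ap k) = -Ap k)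
    (hcasW : ∑ i, A i ∘ₗ A i = (-((2 * (j : ℂ) + 1) * (2 * (j : ℂ) + 3))) • LinearMap.id)
    (hcasp : ∑ i, Ap i ∘ₗ Ap i = (-((2 * (j : ℂ) + 3) * (2 * (j : ℂ) + 5))) • LinearMap.id)
    (ρT : Fin 3 → (PiLp 2 fun _ : Fin 3 => W) →ₗ[ℂ] (PiLp 2 fun _ : Fin 3 => W))
    (hρT : ∀ k f i, (WithLp.equiv 2 (∀ _ : Fin 3, W)) (ρT k f) i
      = A k ((WithLp.equiv 2 (∀ _ : Fin 3, W)) f i)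
        + ∑ m, ((2 * epsLC k m i : ℤ) : ℂ) • (WithLp.equiv 2 (∀ _ : Fin 3, W)) f m)
    (ιp : Wp →ₗ[ℂ] PiLp 2 fun _ : Fin 3 => W)
    (hpequiv : ∀ k, ιp ∘ₗ Ap k = ρT k ∘ₗ ιp) :
    ∀ k l,
      Ap k ∘ₗ (((Real.sqrt (4 * ((j : ℝ) + 1) / (2 * (j : ℝ) + 3)) : ℝ) : ℂ) • (LinearMap.adjoint ιp ∘ₗ tensE W l)) - (((Real.sqrt (4 * ((j : ℝ) + 1) / (2 * (j : ℝ) + 3)) : ℝ) : ℂ) • (LinearMap.adjoint ιp ∘ₗ tensE W k)) ∘ₗ A l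
      = ((2 * (j : ℂ) + 3) / 2) • ∑ m, ((2 * epsLC k l m : ℤ) : ℂ) • (((Real.sqrt (4 * ((j : ℝ) + 1) / (2 * (j : ℝ) + 3)) : ℝ) : ℂ) • (LinearMap.adjoint ιp ∘ₗ tensE W m)) := by
  intro k l
  set c : ℂ := ((Real.sqrt (4 * ((j : ℝ) + 1) / (2 * (j : ℝ) + 3)) : ℝ) : ℂ)
  have hQ := IsTensorAdjointAction.isTwistedIntertwiner_adjoint_comp_tensE hρT hAskew hApskew
    hpequiv
  have key := hQ.comp_sub_comp hcasW hcasp k l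
  simp only [Fin.sum_univ_three] at key ⊢
  rw [LinearMap.comp_smul, LinearMap.smul_comp]
  linear_combination (norm := module) (c / 4) • key
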